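/- arXiv:2109.06900 — 2 statements merged into one kernel-verified Lean document; each statement's English description precedes it below -/
import Mathlib

section
/- Let d ≥ 1, let A be a Hermitian d×d complex matrix, and let g be a real-valued concave function on the set of d×d density matrices (i.e. g(∑ₖ pₖ ρₖ) ≥ ∑ₖ pₖ g(ρₖ) for all finite convex combinations) such that for every unit vector ψ ∈ ℂ^d one has (ΔA)²_ψ := ⟨ψ, A²ψ⟩ − ⟨ψ, Aψ⟩² ≤ g(|ψ⟩⟨ψ|). Then every density matrix ρ satisfies (ΔA)²_ρ := Tr(A²ρ) − (Tr(Aρ))² ≤ g(ρ). -/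
open Matrix BigOperators
open scoped ComplexOrder

/-- A density matrix: positive semidefinite with unit trace. -/
def IsDensity {d : ℕ} (ρ : Matrix (Fin d) (Fin d) ℂ) : Prop :=
  ρ.PosSemidef ∧ ρ.trace = 1

/-- The rank-one projection |ψ⟩⟨ψ|. -/
def ketbra {d : ℕ} (ψ : Fin d → ℂ) : Matrix (Fin d) (Fin d) ℂ :=
  Matrix.vecMulVec ψ (star ψ)

/-- Pure-state variance (ΔA)²_ψ = ⟨ψ, A²ψ⟩ − ⟨ψ, Aψ⟩². -/
noncomputable def pureVar {d : ℕ} (A : Matrix (Fin d) (Fin d) ℂ) (ψ : Fin d → ℂ) : ℝ :=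
  (star ψ ⬝ᵥ (A * A).mulVec ψ).re - ((star ψ ⬝ᵥ A.mulVec ψ).re) ^ 2

/-- Mixed-state variance (ΔA)²_ρ = Tr(A²ρ) − (Tr(Aρ))². -/
noncomputable def mixVar {d : ℕ} (A ρ : Matrix (Fin d) (Fin d) ℂ) : ℝ :=
  ((A * A * ρ).trace).re - (((A * ρ).trace).re) ^ 2

/-- Concavity of a real-valued function on density matrices:
`g(∑ₖ pₖ ρₖ) ≥ ∑ₖ pₖ g(ρₖ)` for all finite convex combinations of density matrices. -/
def ConcaveOnDensities {d : ℕ} (g : Matrix (Fin d) (Fin d) ℂ → ℝ) : Prop :=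
  ∀ (m : ℕ) (p : Fin m → ℝ) (σ : Fin m → Matrix (Fin d) (Fin d) ℂ),
    (∀ k, 0 ≤ p k) → (∑ k, p k) = 1 → (∀ k, IsDensity (σ k)) →
      (∑ k, p k * g (σ k)) ≤ g (∑ k, p k • σ k)

/-! Along a decomposition `ρ = ∑ pₖ |ψₖ⟩⟨ψₖ|` into pure states that all have the mean
`Re ⟨ψₖ, Aψₖ⟩ = t := Re Tr(Aρ)`, the variance is affine: `(ΔA)²_ρ = ∑ pₖ (ΔA)²_ψₖ`, which is at most
`∑ pₖ g(|ψₖ⟩⟨ψₖ|) ≤ g(ρ)` by hypothesis and concavity.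

Such a decomposition exists. Write `ρ = ∑ |wₖ⟩⟨wₖ|` with unnormalised `wₖ`; the real-linear functional
`L σ = Re Tr(Aσ) - t Re Tr σ` vanishes on `ρ`, so on the sum of the `|wₖ⟩⟨wₖ|`. Replacing a pair
`(x, y)` by `(cos θ x + sin θ y, -sin θ x + cos θ y)` keeps `|x⟩⟨x| + |y⟩⟨y|`, and if `L` takes
opposite signs on `x` and `y` the intermediate value theorem on `θ ∈ [0, π/2]` makes `L` vanish on
the first vector. Doing this to each vector in turn makes `L` vanish on every term; normalising
the nonzero `wₖ` gives the `ψₖ`. -/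

open Real

section

variable {d : ℕ}

lemma trace_mul_ketbra (B : Matrix (Fin d) (Fin d) ℂ) (ψ : Fin d → ℂ) :
    (B * ketbra ψ).trace = star ψ ⬝ᵥ B *ᵥ ψ := by
  rw [ketbra, mul_vecMulVec, trace_vecMulVec, dotProduct_comm]

lemma trace_ketbra (ψ : Fin d → ℂ) : (ketbra ψ).trace = star ψ ⬝ᵥ ψ := by
  rw [ketbra, trace_vecMulVec, dotProduct_comm]

lemma isDensity_ketbra {ψ : Fin d → ℂ} (hψ : star ψ ⬝ᵥ ψ = 1) :
    IsDensity (ketbra ψ) :=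
  ⟨posSemidef_vecMulVec_self_star ψ, by rw [trace_ketbra, hψ]⟩

lemma ketbra_real_smul (r : ℝ) (ψ : Fin d → ℂ) : ketbra (r • ψ) = (r ^ 2) • ketbra ψ := by
  rw [ketbra, star_smul, star_trivial, smul_vecMulVec, vecMulVec_smul, smul_smul, ← sq, ketbra]

lemma mixVar_ketbra (A : Matrix (Fin d) (Fin d) ℂ) (ψ : Fin d → ℂ) :
    mixVar A (ketbra ψ) = pureVar A ψ := by
  rw [mixVar, pureVar, trace_mul_ketbra, trace_mul_ketbra]

lemma re_trace_mul_sum_smul {m : ℕ} (B : Matrix (Fin d) (Fin d) ℂ) (p : Fin m → ℝ)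
    (σ : Fin m → Matrix (Fin d) (Fin d) ℂ) :
    (B * ∑ k, p k • σ k).trace.re = ∑ k, p k * (B * σ k).trace.re := by
  simp [Finset.mul_sum, trace_sum, Complex.re_sum]

lemma ketbra_rotate_add_ketbra_rotate (x y : Fin d → ℂ) (θ : ℝ) :
    ketbra (cos θ • x + sin θ • y) + ketbra ((-sin θ) • x + cos θ • y) =
      ketbra x + ketbra y := by
  have hcs : (cos θ : ℂ) ^ 2 + (sin θ : ℂ) ^ 2 = 1 := by exact_mod_cast cos_sq_add_sin_sq θ
  ext i j
  simp only [ketbra, Matrix.add_apply, vecMulVec_apply, Pi.add_apply, Pi.smul_apply,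
    Pi.star_apply, Complex.real_smul, star_add, star_mul', Complex.star_def, map_neg,
    Complex.conj_ofReal, Complex.ofReal_neg]
  linear_combination (x i * (starRingEnd ℂ) (x j) + y i * (starRingEnd ℂ) (y j)) * hcs

section

variable (L : Matrix (Fin d) (Fin d) ℂ →ₗ[ℝ] ℝ)

lemma exists_apply_ketbra_rotate_eq_zero {x y : Fin d → ℂ}
    (hxy : L (ketbra x) * L (ketbra y) ≤ 0) :
    ∃ θ : ℝ, L (ketbra (cos θ • x + sin θ • y)) = 0 := by
  have hcont : Continuous fun θ : ℝ => L (ketbra (cos θ • x + sin θ • y)) :=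
    (LinearMap.continuous_of_finiteDimensional L).comp <|
      (by fun_prop : Continuous fun θ : ℝ => cos θ • x + sin θ • y).matrix_vecMulVec
        (by fun_prop)
  have hmem : (0 : ℝ) ∈ Set.uIcc (L (ketbra x)) (L (ketbra y)) := by
    rw [Set.mem_uIcc]
    rcases mul_nonpos_iff.mp hxy with h | h
    · exact Or.inr ⟨h.2, h.1⟩
    · exact Or.inl h
  obtain ⟨θ, -, hθ⟩ := intermediate_value_uIcc (a := 0) (b := π / 2) hcont.continuousOn
    (by simpa using hmem)
  exact ⟨θ, hθ⟩

lemma sum_ketbra_update_add {m : ℕ} (w : Fin m → Fin d → ℂ) (j : Fin m) (y : Fin d → ℂ) :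
    ∑ k, ketbra (Function.update w j y k) + ketbra (w j) = ∑ k, ketbra (w k) + ketbra y := by
  simp only [Function.apply_update (fun _ => ketbra), Finset.sum_update_of_mem (Finset.mem_univ j),
    Finset.sum_eq_add_sum_sdiff_singleton_of_mem (Finset.mem_univ j) fun k => ketbra (w k)]
  abel

lemma exists_sum_ketbra_eq_apply_head_eq_zero {m : ℕ} (w : Fin (m + 1) → Fin d → ℂ)
    (hw : L (∑ k, ketbra (w k)) = 0) :
    ∃ u : Fin (m + 1) → Fin d → ℂ, ∑ k, ketbra (u k) = ∑ k, ketbra (w k) ∧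
      L (ketbra (u 0)) = 0 := by
  by_cases h0 : L (ketbra (w 0)) = 0
  · exact ⟨w, rfl, h0⟩
  have htail : L (∑ j : Fin m, ketbra (w j.succ)) = -L (ketbra (w 0)) := by
    rw [Fin.sum_univ_succ, map_add] at hw
    linarith
  -- the tail compensates the head, so some tail vector has `L`-value of the opposite sign
  obtain ⟨j, -, hj⟩ : ∃ j ∈ (Finset.univ : Finset (Fin m)),
      L (ketbra (w 0)) * L (ketbra (w (Fin.succ j))) < 0 := by
    refine Finset.exists_lt_of_sum_lt ?_
    rw [← Finset.mul_sum, ← map_sum, htail, Finset.sum_const_zero, mul_neg]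
    exact neg_neg_iff_pos.mpr (mul_self_pos.mpr h0)
  obtain ⟨θ, hθ⟩ := exists_apply_ketbra_rotate_eq_zero L hj.le
  set x := w 0
  set y := w j.succ
  refine ⟨Fin.cons (cos θ • x + sin θ • y)
    (Function.update (Fin.tail w) j ((-sin θ) • x + cos θ • y)), ?_, hθ⟩
  have hrot := ketbra_rotate_add_ketbra_rotate x y θ
  have hupd := sum_ketbra_update_add (Fin.tail w) j ((-sin θ) • x + cos θ • y)
  simp only [Fin.tail] at hupd
  rw [Fin.sum_univ_succ, Fin.sum_univ_succ fun k => ketbra (w k)]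
  simp only [Fin.cons_zero, Fin.cons_succ]
  calc _ = ketbra (cos θ • x + sin θ • y) + ketbra ((-sin θ) • x + cos θ • y)
        + ∑ k : Fin m, ketbra (w k.succ) - ketbra y := by
          rw [eq_sub_of_add_eq hupd]; abel
    _ = _ := by rw [hrot]; abel

lemma exists_sum_ketbra_eq_forall_apply_eq_zero {m : ℕ} (w : Fin m → Fin d → ℂ)
    (hw : L (∑ k, ketbra (w k)) = 0) :
    ∃ u : Fin m → Fin d → ℂ, ∑ k, ketbra (u k) = ∑ k, ketbra (w k) ∧
      ∀ k, L (ketbra (u k)) = 0 := by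
  induction m with
  | zero => exact ⟨w, rfl, fun k => k.elim0⟩
  | succ m ih =>
    obtain ⟨u, hu, hu0⟩ := exists_sum_ketbra_eq_apply_head_eq_zero L w hw
    have hsum (v : Fin (m + 1) → Fin d → ℂ) :
        ∑ k, ketbra (v k) = ketbra (v 0) + ∑ k, ketbra (Fin.tail v k) :=
      Fin.sum_univ_succ _
    rw [← hu, hsum, map_add, hu0, zero_add] at hw
    obtain ⟨v, hv, hv0⟩ := ih (Fin.tail u) hw
    refine ⟨Fin.cons (u 0) v, ?_, Fin.cases hu0 hv0⟩
    rw [← hu, hsum, hsum u, Fin.cons_zero, Fin.tail_cons, hv]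

end

lemma mixVar_sum_smul_of_re_trace_mul_eq {m : ℕ} (A : Matrix (Fin d) (Fin d) ℂ)
    (p : Fin m → ℝ) (σ : Fin m → Matrix (Fin d) (Fin d) ℂ) (hp : ∑ k, p k = 1)
    (hmean : ∀ k, p k ≠ 0 →
      (A * σ k).trace.re = (A * ∑ k, p k • σ k).trace.re) :
    mixVar A (∑ k, p k • σ k) = ∑ k, p k * mixVar A (σ k) := by
  set t := (A * ∑ k, p k • σ k).trace.re
  have hsq : ∀ k, p k * (A * σ k).trace.re ^ 2 = p k * t ^ 2 := fun k => by
    rcases eq_or_ne (p k) 0 with h | h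
    · rw [h, zero_mul, zero_mul]
    · rw [hmean k h]
  simp only [mixVar, mul_sub, Finset.sum_sub_distrib, hsq, ← Finset.sum_mul, hp, one_mul]
  rw [re_trace_mul_sum_smul]

lemma exists_unit_ketbra_eq_smul [NeZero d] (w : Fin d → ℂ) :
    ∃ ψ : Fin d → ℂ, star ψ ⬝ᵥ ψ = 1 ∧ ketbra w = (star w ⬝ᵥ w).re • ketbra ψ := by
  rcases eq_or_ne w 0 with rfl | hw
  · exact ⟨Pi.single 0 1, by simp, by simp [ketbra]⟩
  set q := (star w ⬝ᵥ w).re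
  have hq : star w ⬝ᵥ w = q := Complex.eq_re_of_ofReal_le (dotProduct_star_self_nonneg w)
  have hpos : 0 < q := (Complex.pos_iff.mp (dotProduct_star_self_pos_iff.mpr hw)).1
  set ψ := (√q)⁻¹ • w
  have hketbra : ketbra w = q • ketbra ψ := by
    rw [ketbra_real_smul, smul_smul, inv_pow, Real.sq_sqrt hpos.le, mul_inv_cancel₀ hpos.ne',
      one_smul]
  refine ⟨ψ, ?_, hketbra⟩
  have htrace := congrArg trace hketbra
  rw [trace_smul, trace_ketbra, trace_ketbra, hq, Complex.real_smul] at htrace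
  exact (mul_eq_left₀ (by exact_mod_cast hpos.ne')).mp htrace.symm

open scoped MatrixOrder in
lemma Matrix.PosSemidef.exists_eq_sum_ketbra {ρ : Matrix (Fin d) (Fin d) ℂ} (hρ : ρ.PosSemidef) :
    ∃ w : Fin d → Fin d → ℂ, ρ = ∑ k, ketbra (w k) := by
  obtain ⟨B, rfl⟩ := CStarAlgebra.nonneg_iff_eq_star_mul_self.mp hρ.nonneg
  refine ⟨fun k => star (B k), ?_⟩
  ext i j
  simp [mul_apply, ketbra, vecMulVec_apply, Matrix.sum_apply]

lemma IsDensity.neZero {ρ : Matrix (Fin d) (Fin d) ℂ} (hρ : IsDensity ρ) : NeZero d :=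
  ⟨by rintro rfl; simpa using hρ.2⟩

lemma IsDensity.exists_pure_decomposition_re_trace_mul_eq
    (A : Matrix (Fin d) (Fin d) ℂ) {ρ : Matrix (Fin d) (Fin d) ℂ} (hρ : IsDensity ρ) :
    ∃ (p : Fin d → ℝ) (ψ : Fin d → Fin d → ℂ), (∀ k, 0 ≤ p k) ∧ ∑ k, p k = 1 ∧
      (∀ k, star (ψ k) ⬝ᵥ ψ k = 1) ∧ ρ = ∑ k, p k • ketbra (ψ k) ∧
      ∀ k, p k ≠ 0 → (A * ketbra (ψ k)).trace.re = (A * ρ).trace.re := by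
  have := hρ.neZero
  set t := (A * ρ).trace.re
  let L : Matrix (Fin d) (Fin d) ℂ →ₗ[ℝ] ℝ :=
    Complex.reLm ∘ₗ (traceLinearMap (Fin d) ℝ ℂ ∘ₗ LinearMap.mulLeft ℝ (A - (t : ℂ) • 1))
  have hL (M : Matrix (Fin d) (Fin d) ℂ) : L M = (A * M).trace.re - t * M.trace.re := by
    simp [L, sub_mul, trace_sub]
  obtain ⟨w, hw⟩ := hρ.1.exists_eq_sum_ketbra
  obtain ⟨u, hu, hu0⟩ := exists_sum_ketbra_eq_forall_apply_eq_zero L w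
    (by rw [← hw, hL, hρ.2, Complex.one_re, mul_one, sub_self])
  choose ψ hψ hψu using fun k => exists_unit_ketbra_eq_smul (u k)
  set p := fun k => (star (u k) ⬝ᵥ u k).re
  have hρψ : ρ = ∑ k, p k • ketbra (ψ k) := by
    rw [hw, ← hu]
    exact Finset.sum_congr rfl fun k _ => hψu k
  refine ⟨p, ψ, fun k => (Complex.nonneg_iff.mp (dotProduct_star_self_nonneg _)).1, ?_, hψ,
    hρψ, fun k hk => ?_⟩
  · have := re_trace_mul_sum_smul 1 p fun k => ketbra (ψ k)
    simpa [← hρψ, hρ.2, trace_ketbra, hψ] using this.symm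
  · have := hu0 k
    rw [hψu k, map_smul, smul_eq_mul, hL, trace_ketbra, hψ, Complex.one_re, mul_one,
      mul_eq_zero, sub_eq_zero] at this
    exact this.resolve_left hk

end

theorem stmt_2_general {d : ℕ}
    (A : Matrix (Fin d) (Fin d) ℂ)
    (g : Matrix (Fin d) (Fin d) ℂ → ℝ) (hg : ConcaveOnDensities g)
    (hpure : ∀ ψ : Fin d → ℂ, star ψ ⬝ᵥ ψ = 1 → pureVar A ψ ≤ g (ketbra ψ))
    (ρ : Matrix (Fin d) (Fin d) ℂ) (hρ : IsDensity ρ) :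
    mixVar A ρ ≤ g ρ := by
  obtain ⟨p, ψ, hp0, hp1, hψ, rfl, hmean⟩ := hρ.exists_pure_decomposition_re_trace_mul_eq A
  calc mixVar A (∑ k, p k • ketbra (ψ k))
      = ∑ k, p k * pureVar A (ψ k) := by
        simp only [mixVar_sum_smul_of_re_trace_mul_eq A p _ hp1 hmean, mixVar_ketbra]
    _ ≤ ∑ k, p k * g (ketbra (ψ k)) :=
        Finset.sum_le_sum fun k _ => mul_le_mul_of_nonneg_left (hpure _ (hψ k)) (hp0 k)
    _ ≤ g (∑ k, p k • ketbra (ψ k)) :=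
        hg d p _ hp0 hp1 fun k => isDensity_ketbra (hψ k)

theorem stmt_2 {d : ℕ} (hd : 1 ≤ d)
    (A : Matrix (Fin d) (Fin d) ℂ) (hA : A.IsHermitian)
    (g : Matrix (Fin d) (Fin d) ℂ → ℝ) (hg : ConcaveOnDensities g)
    (hpure : ∀ ψ : Fin d → ℂ, star ψ ⬝ᵥ ψ = 1 → pureVar A ψ ≤ g (ketbra ψ))
    (ρ : Matrix (Fin d) (Fin d) ℂ) (hρ : IsDensity ρ) :
    mixVar A ρ ≤ g ρ :=
  stmt_2_general A g hg hpure ρ hρ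
end

section
/- (Uniqueness of the direction of the minimal decomposition.) Let n ∈ ℝ³ be a unit vector, let pₖ > 0 be weights with ∑ₖ pₖ = 1 (finite family), let rₖ ∈ ℝ³ be unit vectors, and set r = ∑ₖ pₖ rₖ. If the decomposition attains the minimal average variance, i.e. ∑ₖ pₖ (1 − (n·rₖ)²) = ‖r‖² − (n·r)², then for every k the separation vector rₖ − r is parallel to n, i.e. n × (rₖ − r) = 0. -/
/-!
Since `n` is a unit vector and each `rₖ` is a unit vector, Lagrange's identity gives
`‖n × rₖ‖² = 1 − (n·rₖ)²` and `‖n × r‖² = ‖r‖² − (n·r)²`, while `n × r = ∑ₖ pₖ (n × rₖ)` by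
linearity. Minimality therefore says that the weighted mean of `‖n × rₖ‖²` equals the squared
norm of the weighted mean of the `n × rₖ`, i.e. that the vectors `n × rₖ` have zero weighted
variance. With positive weights this forces `n × rₖ = n × r` for every `k`.
-/

open Matrix BigOperators
open scoped Matrix

section WeightedVariance

variable {R ι κ : Type*} [Fintype ι] [Fintype κ]

theorem sum_mul_dotProduct_self_sub_mean [CommRing R] (p : κ → R) (x : κ → ι → R)
    (μ : ι → R) (hp1 : ∑ k, p k = 1) (hμ : μ = ∑ k, p k • x k) :
    ∑ k, p k * ((x k - μ) ⬝ᵥ (x k - μ)) = ∑ k, p k * (x k ⬝ᵥ x k) - μ ⬝ᵥ μ := by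
  have hcross : ∑ k, p k * (x k ⬝ᵥ μ) = μ ⬝ᵥ μ := by
    conv_rhs => enter [1]; rw [hμ]
    simp only [sum_dotProduct, smul_dotProduct, smul_eq_mul]
  calc ∑ k, p k * ((x k - μ) ⬝ᵥ (x k - μ))
      = ∑ k, p k * (x k ⬝ᵥ x k) - 2 * ∑ k, p k * (x k ⬝ᵥ μ) + (∑ k, p k) * (μ ⬝ᵥ μ) := by
        simp only [sub_dotProduct, dotProduct_sub, dotProduct_comm μ, Finset.mul_sum,
          Finset.sum_mul, ← Finset.sum_sub_distrib, ← Finset.sum_add_distrib]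
        exact Finset.sum_congr rfl fun k _ => by ring
    _ = ∑ k, p k * (x k ⬝ᵥ x k) - μ ⬝ᵥ μ := by rw [hcross, hp1]; ring

theorem eq_mean_of_sum_mul_dotProduct_self_eq [CommRing R] [LinearOrder R]
    [IsStrictOrderedRing R] (p : κ → R) (x : κ → ι → R) (μ : ι → R) (hp : ∀ k, 0 < p k)
    (hp1 : ∑ k, p k = 1) (hμ : μ = ∑ k, p k • x k)
    (h : ∑ k, p k * (x k ⬝ᵥ x k) = μ ⬝ᵥ μ) (k : κ) : x k = μ := by
  have hvar : ∑ k, p k * ((x k - μ) ⬝ᵥ (x k - μ)) = 0 := by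
    rw [sum_mul_dotProduct_self_sub_mean p x μ hp1 hμ, h, sub_self]
  have hnonneg : ∀ j ∈ Finset.univ, 0 ≤ p j * ((x j - μ) ⬝ᵥ (x j - μ)) := fun j _ =>
    mul_nonneg (hp j).le (Finset.sum_nonneg fun i _ => mul_self_nonneg _)
  have hk := (Finset.sum_eq_zero_iff_of_nonneg hnonneg).mp hvar k (Finset.mem_univ k)
  rw [mul_eq_zero, or_iff_right (hp k).ne', dotProduct_self_eq_zero, sub_eq_zero] at hk
  exact hk

end WeightedVariance

theorem cross_dotProduct_cross_of_dotProduct_self_eq_one {R : Type*} [CommRing R]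
    {n : Fin 3 → R} (hn : n ⬝ᵥ n = 1) (v : Fin 3 → R) :
    n ⨯₃ v ⬝ᵥ n ⨯₃ v = v ⬝ᵥ v - (n ⬝ᵥ v) ^ 2 := by
  rw [cross_dot_cross, hn, dotProduct_comm v n]
  ring

/-- Uniqueness of the direction of the minimal decomposition: if a pure-state
decomposition {pₖ, rₖ} (in the Bloch representation, with pₖ > 0 and unit vectors rₖ
averaging to r) attains the minimal average variance, i.e.
∑ₖ pₖ (1 − (n·rₖ)²) = ‖r‖² − (n·r)², then every separation vector rₖ − r is parallel
to n, i.e. n × (rₖ − r) = 0. -/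
theorem stmt_19 (n : Fin 3 → ℝ) (hn : n ⬝ᵥ n = 1)
    (m : ℕ) (p : Fin m → ℝ) (r' : Fin m → (Fin 3 → ℝ))
    (hp : ∀ k, 0 < p k) (hp1 : (∑ k, p k) = 1)
    (hr : ∀ k, r' k ⬝ᵥ r' k = 1)
    (r : Fin 3 → ℝ) (hmean : r = ∑ k, p k • r' k)
    (hmin : (∑ k, p k * (1 - (n ⬝ᵥ r' k) ^ 2)) = r ⬝ᵥ r - (n ⬝ᵥ r) ^ 2) :
    ∀ k, n ⨯₃ (r' k - r) = 0 := by
  have hcross_mean : n ⨯₃ r = ∑ k, p k • n ⨯₃ r' k := by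
    rw [hmean, map_sum]
    simp only [map_smul]
  have hcross_var : ∑ k, p k * (n ⨯₃ r' k ⬝ᵥ n ⨯₃ r' k) = n ⨯₃ r ⬝ᵥ n ⨯₃ r := by
    simp only [cross_dotProduct_cross_of_dotProduct_self_eq_one hn, hr]
    exact hmin
  intro k
  rw [map_sub, sub_eq_zero]
  exact eq_mean_of_sum_mul_dotProduct_self_eq p (fun k => n ⨯₃ r' k) (n ⨯₃ r) hp hp1
    hcross_mean hcross_var k
end
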